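/- arXiv:1706.01668 — 2 statements merged into one kernel-verified Lean document; each statement's English description precedes it below -/
import Mathlib

section
/- Strong Fine–Wilf: suppose w1 = w1' · w · w1'' has period p1, w2 = w2' · w · w2'' has period p2, and the common factor w has length at least p1 + p2 - gcd(p1,p2). Then the word w3 = w1' · w · w2'' (prefix from w1, suffix from w2, glued on the common factor w) has period gcd(p1,p2). -/
/-!
The common factor `w` has both periods `p1` and `p2` and is long enough for the classical
Fine–Wilf theorem, so it has period `g = gcd p1 p2`. Since `g ∣ p1` and `|w| ≥ p1`, every
position of `w1' ++ w` is congruent modulo `p1` to one inside `w`, so the period `g` spreads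
from `w` to all of `w1' ++ w`; likewise to `w ++ w2''`. Two words with period `g` overlapping
in at least `g` letters glue to a word with period `g`.

The classical theorem itself is Euclid's algorithm: if `q < p`, the prefix of length `|w| - q`
has periods `p - q` and `q`, hence period `g` by induction, and this spreads to all of `w` in
the same way.
-/

/-- A word `w` has period `p` if letters at distance `p` coincide. -/
def HasPeriod {α : Type*} (w : List α) (p : ℕ) : Prop :=
  ∀ i, i + p < w.length → w[i]? = w[i + p]?

namespace HasPeriod

variable {α : Type*} {v w x y : List α} {p q : ℕ}

theorem of_infix (h : HasPeriod w p) (hv : v <:+: w) : HasPeriod v p := by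
  obtain ⟨s, t, rfl⟩ := hv
  intro i hi
  have shift : ∀ k < v.length, (s ++ v ++ t)[s.length + k]? = v[k]? := fun k hk => by
    rw [List.append_assoc, List.getElem?_append_right (Nat.le_add_right _ _),
      Nat.add_sub_cancel_left, List.getElem?_append_left hk]
  have := h (s.length + i) (by simp only [List.length_append]; omega)
  rwa [shift i (by omega), Nat.add_assoc, shift (i + p) hi] at this

theorem reverse (h : HasPeriod w p) : HasPeriod w.reverse p := by
  intro i hi
  rw [List.length_reverse] at hi
  rw [List.getElem?_reverse (by omega), List.getElem?_reverse (by omega)]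
  have := h (w.length - 1 - (i + p)) (by omega)
  rwa [show w.length - 1 - (i + p) + p = w.length - 1 - i by omega, eq_comm] at this

theorem getElem?_add_mul (h : HasPeriod w p) {i : ℕ} :
    ∀ k, i + p * k < w.length → w[i]? = w[i + p * k]?
  | 0, _ => rfl
  | k + 1, hk => by
    rw [Nat.mul_succ] at hk
    rw [getElem?_add_mul h k (by omega), h _ (by omega), Nat.mul_succ, Nat.add_assoc]

theorem getElem?_eq_of_modEq (h : HasPeriod w p) {i j : ℕ} (hij : i ≡ j [MOD p])
    (hi : i < w.length) (hj : j < w.length) : w[i]? = w[j]? := by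
  have reduce : ∀ k < w.length, w[k % p]? = w[k]? := fun k hk => by
    conv_rhs => rw [← Nat.mod_add_div k p]
    exact h.getElem?_add_mul _ (by rwa [Nat.mod_add_div])
  rw [← reduce i hi, ← reduce j hj, hij]

theorem of_prefix_of_dvd (h : HasPeriod w p) (hp : 0 < p) (hv : v <+: w) (hpv : p ≤ v.length)
    (hvq : HasPeriod v q) (hqp : q ∣ p) : HasPeriod w q := by
  obtain ⟨t, rfl⟩ := hv
  have hmod : ∀ k < (v ++ t).length, (v ++ t)[k]? = v[k % p]? := fun k hk => by
    rw [← List.getElem?_append_left (l₁ := v) (l₂ := t) (by have := Nat.mod_lt k hp; omega)]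
    exact h.getElem?_eq_of_modEq (Nat.mod_modEq k p).symm hk
      (by have := Nat.mod_lt k hp; simp only [List.length_append]; omega)
  intro i hi
  rw [hmod i (by omega), hmod (i + q) hi]
  refine hvq.getElem?_eq_of_modEq ?_ (by have := Nat.mod_lt i hp; omega)
    (by have := Nat.mod_lt (i + q) hp; omega)
  simp only [Nat.ModEq, Nat.mod_mod_of_dvd _ hqp, Nat.add_mod_right]

theorem of_suffix_of_dvd (h : HasPeriod w p) (hp : 0 < p) (hv : v <:+ w) (hpv : p ≤ v.length)
    (hvq : HasPeriod v q) (hqp : q ∣ p) : HasPeriod w q := by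
  simpa using (h.reverse.of_prefix_of_dvd hp hv.reverse (by simpa) hvq.reverse hqp).reverse

theorem take_length_sub (hp : HasPeriod w p) (hq : HasPeriod w q) (hqp : q ≤ p) :
    HasPeriod (w.take (w.length - q)) (p - q) := by
  intro i hi
  simp only [List.length_take] at hi
  rw [List.getElem?_take_of_lt (by omega), List.getElem?_take_of_lt (by omega), hp i (by omega),
    hq (i + (p - q)) (by omega), show i + (p - q) + q = i + p by omega]

theorem gcd (hp : HasPeriod w p) (hq : HasPeriod w q) (hlen : p + q - p.gcd q ≤ w.length) :
    HasPeriod w (p.gcd q) := by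
  induction hn : p + q using Nat.strong_induction_on generalizing w p q with | _ n ih
  wlog hqp : q ≤ p generalizing p q
  · rw [Nat.gcd_comm] at hlen ⊢
    exact this hq hp (by omega) (by omega) (by omega)
  rcases Nat.eq_zero_or_pos q with rfl | hq0
  · simpa using hp
  rcases hqp.lt_or_eq with hqp | rfl
  · have hgcd : (p - q).gcd q = p.gcd q := Nat.gcd_sub_self_left hqp.le
    have hgq : p.gcd q ≤ q := Nat.le_of_dvd hq0 (Nat.gcd_dvd_right p q)
    have hgpq : p.gcd q ≤ p - q :=
      hgcd ▸ Nat.le_of_dvd (by omega) (Nat.gcd_dvd_left (p - q) q)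
    have hu : HasPeriod (w.take (w.length - q)) (p.gcd q) :=
      hgcd ▸ ih _ (by omega) (hp.take_length_sub hq hqp.le)
        (hq.of_infix (List.take_prefix _ _).isInfix)
        (by simp only [List.length_take, hgcd]; omega) rfl
    exact hq.of_prefix_of_dvd hq0 (List.take_prefix _ _) (by simp only [List.length_take]; omega)
      hu (Nat.gcd_dvd_right p q)
  · simpa using hp

theorem append_of_overlap (hl : HasPeriod (x ++ w) p) (hr : HasPeriod (w ++ y) p)
    (hp : p ≤ w.length) : HasPeriod (x ++ w ++ y) p := by
  intro i hi
  simp only [List.length_append] at hi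
  by_cases hleft : i + p < x.length + w.length
  · rw [List.getElem?_append_left (l₁ := x ++ w) (by simp only [List.length_append]; omega),
      List.getElem?_append_left (l₁ := x ++ w) (by simp only [List.length_append]; omega)]
    exact hl i (by simpa using hleft)
  · rw [List.append_assoc, List.getElem?_append_right (l₁ := x) (by omega),
      List.getElem?_append_right (l₁ := x) (by omega),
      show i + p - x.length = i - x.length + p by omega]
    exact hr _ (by simp only [List.length_append]; omega)

end HasPeriod

/-- Strong Fine–Wilf theorem: if `w1 = w1' · w · w1''` has period `p1`,
`w2 = w2' · w · w2''` has period `p2`, and the common factor `w` has length at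
least `p1 + p2 - gcd(p1,p2)`, then the glued word `w3 = w1' · w · w2''`
has period `gcd(p1,p2)`. -/
theorem strong_fine_wilf {α : Type*} (w1' w w1'' w2' w2'' : List α) (p1 p2 : ℕ)
    (hp1 : 1 ≤ p1) (hp2 : 1 ≤ p2)
    (h1 : HasPeriod (w1' ++ w ++ w1'') p1)
    (h2 : HasPeriod (w2' ++ w ++ w2'') p2)
    (hlen : p1 + p2 - Nat.gcd p1 p2 ≤ w.length) :
    HasPeriod (w1' ++ w ++ w2'') (Nat.gcd p1 p2) := by
  have hw : HasPeriod w (p1.gcd p2) :=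
    (h1.of_infix (List.infix_append _ _ _)).gcd (h2.of_infix (List.infix_append _ _ _)) hlen
  have hg2 : p1.gcd p2 ≤ p2 := Nat.le_of_dvd hp2 (Nat.gcd_dvd_right p1 p2)
  have hg1 : p1.gcd p2 ≤ p1 := Nat.le_of_dvd hp1 (Nat.gcd_dvd_left p1 p2)
  have hleft : HasPeriod (w1' ++ w) (p1.gcd p2) :=
    (h1.of_infix (List.prefix_append _ _).isInfix).of_suffix_of_dvd hp1
      (List.suffix_append _ _) (by omega) hw (Nat.gcd_dvd_left p1 p2)
  have hright : HasPeriod (w ++ w2'') (p1.gcd p2) :=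
    (h2.of_infix ⟨w2', [], by simp⟩).of_prefix_of_dvd hp2
      (List.prefix_append _ _) (by omega) hw (Nat.gcd_dvd_right p1 p2)
  exact hleft.append_of_overlap hright (by omega)
end

section
/- Suppose the word α = v_1^{n1+1} · v_2 · v_3 (a prefix) has period |v_1|, the word β = v_1 · v_2 · v_3^{n2+1} (a suffix of the same word w = v_1^{n1+1} · v_2 · v_3^{n2+1}) has period |v_3|, where v_1, v_3 are nonempty. Since α and β share within w a common factor of length at least |v_1| + |v_3|, the whole word w = v_1^{n1+1} · v_2 · v_3^{n2+1} has period gcd(|v_1|, |v_3|). -/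
/-- `npow n v` is the `n`-fold repetition `v^n`. -/
def npow {α : Type*} (n : ℕ) (v : List α) : List α :=
  (List.replicate n v).flatten

section

variable {α : Type*}

theorem hasPeriod_iff_list_hasPeriod {w : List α} {p : ℕ} :
    HasPeriod w p ↔ w.HasPeriod p := by
  rw [List.hasPeriod_iff_getElem?]
  exact forall_congr' fun i => by rw [Nat.lt_sub_iff_add_lt]

theorem npow_succ (n : ℕ) (v : List α) : npow (n + 1) v = npow n v ++ v := by
  simp [npow, List.replicate_succ']

theorem npow_succ' (n : ℕ) (v : List α) : npow (n + 1) v = v ++ npow n v := by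
  simp [npow, List.replicate_succ]

theorem reverse_npow (n : ℕ) (v : List α) : (npow n v).reverse = npow n v.reverse := by
  simp [npow, List.reverse_flatten]

namespace List

theorem HasPeriod.reverse {w : List α} {p : ℕ} (h : w.HasPeriod p) :
    w.reverse.HasPeriod p := by
  rw [hasPeriod_iff_getElem?] at h ⊢
  intro i hi
  rw [length_reverse] at hi
  rw [getElem?_reverse (by omega), getElem?_reverse (by omega),
    show w.length - 1 - i = w.length - 1 - (i + p) + p by omega]
  exact (h _ (by omega)).symm

theorem hasPeriod_reverse {w : List α} {p : ℕ} : w.reverse.HasPeriod p ↔ w.HasPeriod p :=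
  ⟨fun h => w.reverse_reverse ▸ h.reverse, HasPeriod.reverse⟩

theorem HasPeriod.npow_append {u v : List α} {d : ℕ} (hu : u.HasPeriod d) (hvu : v <+: u)
    (hd : d ∣ v.length) (n : ℕ) : (npow n v ++ u).HasPeriod d := by
  induction n with
  | zero => simpa [npow]
  | succ n ih =>
    have hv : v <+: npow n v ++ u := by
      cases n with
      | zero => simpa [npow]
      | succ n => simp [npow_succ', append_assoc]
    have h := ih.take_append d _ _ hd hv.length_le
    rwa [← prefix_iff_eq_take.mp hv, ← append_assoc, ← npow_succ'] at h

theorem HasPeriod.append_npow {u v : List α} {d : ℕ} (hu : u.HasPeriod d) (hvu : v <:+ u)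
    (hd : d ∣ v.length) (n : ℕ) : (u ++ npow n v).HasPeriod d := by
  rw [← hasPeriod_reverse, reverse_append, reverse_npow]
  exact hu.reverse.npow_append (reverse_prefix.mpr hvu) (by rwa [length_reverse]) n

end List

end

theorem overlapping_prefix_suffix_period_general {α : Type*} (v1 v2 v3 : List α)
    (n1 n2 : ℕ)
    (hpre : HasPeriod (npow (n1 + 1) v1 ++ v2 ++ v3) v1.length)
    (hsuf : HasPeriod (v1 ++ v2 ++ npow (n2 + 1) v3) v3.length) :
    HasPeriod (npow (n1 + 1) v1 ++ v2 ++ npow (n2 + 1) v3)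
      (Nat.gcd v1.length v3.length) := by
  rw [hasPeriod_iff_list_hasPeriod] at hpre hsuf ⊢
  set G := v1 ++ v2 ++ v3
  have hGp : G.HasPeriod v1.length :=
    hpre.infix ⟨npow n1 v1, [], by simp [G, npow_succ, List.append_assoc]⟩
  have hGq : G.HasPeriod v3.length :=
    hsuf.infix ⟨[], npow n2 v3, by simp [G, npow_succ', List.append_assoc]⟩
  have hGg : G.HasPeriod (Nat.gcd v1.length v3.length) := hGp.gcd hGq (by simp [G]; omega)
  have hGv3 : (G ++ npow n2 v3).HasPeriod (Nat.gcd v1.length v3.length) :=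
    hGg.append_npow (List.suffix_append _ _) (Nat.gcd_dvd_right _ _) n2
  have hw : (npow n1 v1 ++ (G ++ npow n2 v3)).HasPeriod (Nat.gcd v1.length v3.length) :=
    hGv3.npow_append (by simp [G, List.append_assoc]) (Nat.gcd_dvd_left _ _) n1
  rw [npow_succ n1, npow_succ' n2]
  simpa [G, List.append_assoc] using hw

/-- If the prefix `v_1^{n1+1} · v_2 · v_3` of `w = v_1^{n1+1} · v_2 · v_3^{n2+1}`
has period `|v_1|` and the suffix `v_1 · v_2 · v_3^{n2+1}` has period `|v_3|`
(with `v_1, v_3` nonempty), then `w` has period `gcd(|v_1|, |v_3|)`. -/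
theorem overlapping_prefix_suffix_period {α : Type*} (v1 v2 v3 : List α)
    (n1 n2 : ℕ) (h1 : v1 ≠ []) (h3 : v3 ≠ [])
    (hpre : HasPeriod (npow (n1 + 1) v1 ++ v2 ++ v3) v1.length)
    (hsuf : HasPeriod (v1 ++ v2 ++ npow (n2 + 1) v3) v3.length) :
    HasPeriod (npow (n1 + 1) v1 ++ v2 ++ npow (n2 + 1) v3)
      (Nat.gcd v1.length v3.length) :=
  overlapping_prefix_suffix_period_general v1 v2 v3 n1 n2 hpre hsuf
end
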